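/- arXiv:1709.01130 — 4 statements merged into one kernel-verified Lean document; each statement's English description precedes it below -/
import Mathlib

section
/- In the Lie algebra g = (sl₂ × gl_m) ⋉ (V_n ⊗ ℝ^m), the element Z = −H/2 − (1 + n/2)·id_m (where H is the standard sl₂ Cartan element and id_m ∈ gl_m) acts diagonalizably by the adjoint action with eigenvalues in {−n−1, −n, ..., −1, 0, 1}, and the eigenspace decomposition g = g_{−n−1} ⊕ ... ⊕ g₀ ⊕ g₁ is a Lie algebra grading: [g_i, g_j] ⊆ g_{i+j}. -/
noncomputable section

open scoped BigOperators

/-- Coefficients `(α, β, γ)` representing `α·X + β·H + γ·Y ∈ sl(2,ℝ)`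
in the standard basis `X = x∂_y`, `H = x∂_x - y∂_y`, `Y = y∂_x`. -/
abbrev Sl2 : Type := ℝ × ℝ × ℝ

/-- `gl(m,ℝ)` -/
abbrev Gl (m : ℕ) : Type := Matrix (Fin m) (Fin m) ℝ

/-- `a = V_n ⊗ ℝ^m` where `V_n = S^n(ℝ²)`, in the basis `v^i ⊗ e_b`,
`v^i = (1/i!) x^{n-i} y^i`. -/
abbrev Avec (n m : ℕ) : Type := Matrix (Fin (n+1)) (Fin m) ℝ

/-- `q = sl₂ × gl_m` -/
abbrev Qlie (m : ℕ) : Type := Sl2 × Gl m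

/-- `g = q ⋉ a` as a vector space -/
abbrev Glie (n m : ℕ) : Type := Qlie m × Avec n m

/-- The Lie bracket on `sl₂` in the basis `X, H, Y`:
`[H,X] = 2X`, `[H,Y] = -2Y`, `[X,Y] = H`. -/
def sl2Bracket (p q : Sl2) : Sl2 :=
  (2*(p.2.1*q.1 - q.2.1*p.1), p.1*q.2.2 - q.1*p.2.2, 2*(q.2.1*p.2.2 - p.2.1*q.2.2))

/-- The matrix of `α·X + β·H + γ·Y` acting on `V_n` in the basis
`v^i = (1/i!)x^{n-i}y^i`, so `X v^i = v^{i-1}`, `H v^i = (n-2i)v^i`,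
`Y v^i = (n-i)(i+1) v^{i+1}`. -/
def sl2Mat (n : ℕ) (p : Sl2) : Matrix (Fin (n+1)) (Fin (n+1)) ℝ :=
  fun i j =>
    p.1 * (if (j:ℕ) = (i:ℕ)+1 then 1 else 0)
    + p.2.1 * (if j = i then (n:ℝ) - 2*(i:ℕ) else 0)
    + p.2.2 * (if (j:ℕ)+1 = (i:ℕ) then ((n:ℝ) - (i:ℕ) + 1) * (i:ℕ) else 0)

/-- The action of `q = sl₂ ⊕ gl_m` on `a = V_n ⊗ ℝ^m` (tensor product of the
natural actions). -/
def qAct (n m : ℕ) (q : Qlie m) (u : Avec n m) : Avec n m :=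
  sl2Mat n q.1 * u + u * q.2.transpose

/-- The semidirect product bracket on `g = q ⋉ a`:
`[A ⊕ u, B ⊕ v] = [A,B] ⊕ (A·v − B·u)`. -/
def gBracket {n m : ℕ} (x y : Glie n m) : Glie n m :=
  ((sl2Bracket x.1.1 y.1.1, x.1.2 * y.1.2 - y.1.2 * x.1.2),
   qAct n m x.1 y.2 - qAct n m y.1 x.2)

/-- `X` as an element of `g`. -/
def Xg (n m : ℕ) : Glie n m := (((1,0,0), 0), 0)

/-- `Y` as an element of `g`. -/
def Yg (n m : ℕ) : Glie n m := (((0,0,1), 0), 0)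

/-- The inclusion `a → g`. -/
def embA {n m : ℕ} (u : Avec n m) : Glie n m := (0, u)

/-- The grading element `Z = −H/2 − (1 + n/2)·id_m ∈ q ⊆ g`. -/
def zElt (n m : ℕ) : Glie n m := (((0, -(1:ℝ)/2, 0), (-(1 + (n:ℝ)/2)) • (1 : Gl m)), 0)

/-- The eigenspace of `ad_Z` with eigenvalue `i`. -/
def Egrade (n m : ℕ) (i : ℤ) : Set (Glie n m) :=
  {x | gBracket (zElt n m) x = (i : ℝ) • x}

/-!
In the coordinates of `g` (the coefficients of `X, H, Y`, the matrix in `gl_m`, and the entries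
`v^r ⊗ e_b` of `a`), `ad_Z` is diagonal with weights `-1, 0, 1, 0` and `r - n - 1 ∈ [-n-1, -1]`.
So the eigenspaces are the images of the projections onto the coordinates of a given weight; these
are orthogonal idempotents summing to the identity, which gives the unique decomposition. The
grading holds because `ad_Z` is a derivation of the bracket.
-/

section OrthogonalProjections

variable {ι V : Type*} [DecidableEq ι] [AddCommMonoid V] {s : Finset ι} {P : ι → V →+ V}

theorem AddMonoidHom.apply_eq_zero_of_notMem_of_orthogonal
    (h_orth : ∀ i j x, P i (P j x) = if i = j then P i x else 0) (h_sum : ∀ x, ∑ j ∈ s, P j x = x)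
    {i : ι} (hi : i ∉ s) (x : V) : P i x = 0 := by
  rw [← h_sum x, map_sum]
  refine Finset.sum_eq_zero fun j hj => ?_
  rw [h_orth, if_neg (ne_of_mem_of_not_mem hj hi).symm]

theorem AddMonoidHom.existsUnique_sum_of_orthogonal
    (h_orth : ∀ i j x, P i (P j x) = if i = j then P i x else 0) (h_sum : ∀ x, ∑ j ∈ s, P j x = x)
    (x : V) :
    ∃! f : ι → V, (∀ i, P i (f i) = f i) ∧ (∀ i ∉ s, f i = 0) ∧ x = ∑ i ∈ s, f i := by
  refine ⟨fun i => P i x, ⟨fun i => by rw [h_orth, if_pos rfl],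
    fun i hi => apply_eq_zero_of_notMem_of_orthogonal h_orth h_sum hi x, (h_sum x).symm⟩, ?_⟩
  rintro f ⟨hf_fixed, hf_out, rfl⟩
  funext i
  calc f i = if i ∈ s then P i (f i) else 0 := by
        split_ifs with hi
        · exact (hf_fixed i).symm
        · exact hf_out i hi
    _ = ∑ j ∈ s, P i (P j (f j)) := by simp_rw [h_orth, Finset.sum_ite_eq]
    _ = P i (∑ j ∈ s, f j) := by simp_rw [hf_fixed, map_sum]

end OrthogonalProjections

theorem intCast_mul_eq_intCast_mul_iff {K : Type*} [Field K] [CharZero K] (w k : ℤ) (a : K) :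
    (w : K) * a = k * a ↔ (if w = k then 1 else 0) * a = a := by
  split_ifs with h <;> simp [h, eq_comm (a := (0 : K))]

/-- `Z` acts on `v^r ⊗ e_b ∈ a` by `-(n - 2r)/2 - (1 + n/2) = r - n - 1`. -/
def aWeight (n : ℕ) (r : Fin (n + 1)) : ℤ := r - n - 1

variable {n m : ℕ}

lemma aWeight_mem_Icc (r : Fin (n + 1)) : aWeight n r ∈ Finset.Icc (-(n:ℤ) - 1) 1 := by
  have := r.isLt
  simp only [aWeight, Finset.mem_Icc]
  omega

def weightScale (n m : ℕ) (φ : ℤ → ℝ) : Glie n m →+ Glie n m :=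
  AddMonoidHom.mk' (fun x => (((φ (-1) * x.1.1.1, φ 0 * x.1.1.2.1, φ 1 * x.1.1.2.2), φ 0 • x.1.2),
      Matrix.diagonal (fun r => φ (aWeight n r)) * x.2))
    (by intros; ext <;> simp [mul_add])

lemma weightScale_apply (φ : ℤ → ℝ) (x : Glie n m) : weightScale n m φ x =
    (((φ (-1) * x.1.1.1, φ 0 * x.1.1.2.1, φ 1 * x.1.1.2.2), φ 0 • x.1.2),
      Matrix.diagonal (fun r => φ (aWeight n r)) * x.2) := rfl

lemma weightScale_weightScale (φ ψ : ℤ → ℝ) (x : Glie n m) :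
    weightScale n m φ (weightScale n m ψ x) = weightScale n m (φ * ψ) x := by
  ext <;> simp [weightScale_apply, mul_assoc, smul_smul]

lemma weightScale_congr {φ ψ : ℤ → ℝ} (h : ∀ w ∈ Finset.Icc (-(n:ℤ) - 1) 1, φ w = ψ w) :
    weightScale n m φ = weightScale n m ψ := by
  ext x <;> simp [weightScale_apply, h, h _ (aWeight_mem_Icc _)]

lemma weightScale_one (x : Glie n m) : weightScale n m 1 x = x := by
  ext <;> simp [weightScale_apply]

lemma weightScale_zero (x : Glie n m) : weightScale n m 0 x = 0 := by
  ext <;> simp [weightScale_apply]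

lemma sum_weightScale {ι : Type*} (s : Finset ι) (φ : ι → ℤ → ℝ) (x : Glie n m) :
    ∑ k ∈ s, weightScale n m (φ k) x = weightScale n m (∑ k ∈ s, φ k) x := by
  ext <;> simp [weightScale_apply, Prod.fst_sum, Prod.snd_sum, Matrix.sum_apply, Finset.sum_mul]

lemma gBracket_zElt (x : Glie n m) : gBracket (zElt n m) x = weightScale n m (↑) x := by
  ext <;> simp only [weightScale_apply, Matrix.diagonal_mul]
    <;> simp [gBracket, zElt, sl2Bracket, qAct, sl2Mat, Matrix.mul_apply, aWeight] <;> ring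

def gradeProj (n m : ℕ) (k : ℤ) : Glie n m →+ Glie n m :=
  weightScale n m fun w => if w = k then 1 else 0

lemma gradeProj_gradeProj (i j : ℤ) (x : Glie n m) :
    gradeProj n m i (gradeProj n m j x) = if i = j then gradeProj n m i x else 0 := by
  simp only [gradeProj, weightScale_weightScale]
  split_ifs with h
  · subst h
    congr 2
    ext w
    simp
  · convert weightScale_zero x
    ext w
    simp only [Pi.mul_apply, Pi.zero_apply, mul_ite, mul_one, mul_zero]
    grind

lemma sum_gradeProj (x : Glie n m) : ∑ k ∈ Finset.Icc (-(n:ℤ) - 1) 1, gradeProj n m k x = x := by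
  simp only [gradeProj]
  rw [sum_weightScale, weightScale_congr (ψ := 1), weightScale_one]
  intro w hw
  simp [hw]

lemma mem_Egrade_iff (k : ℤ) (x : Glie n m) : x ∈ Egrade n m k ↔ gradeProj n m k x = x := by
  simp only [Egrade, Set.mem_ofPred_eq, gBracket_zElt, gradeProj, weightScale_apply, Prod.ext_iff,
    ← Matrix.ext_iff, Matrix.diagonal_mul, Prod.smul_fst, Prod.smul_snd, Matrix.smul_apply,
    smul_eq_mul, intCast_mul_eq_intCast_mul_iff]

lemma sl2Mat_smul (c : ℝ) (p : Sl2) : sl2Mat n (c • p) = c • sl2Mat n p := by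
  ext i j
  simp only [sl2Mat, Prod.smul_fst, Prod.smul_snd, smul_eq_mul, Matrix.smul_apply]
  ring

lemma gBracket_smul_left (c : ℝ) (x y : Glie n m) : gBracket (c • x) y = c • gBracket x y := by
  ext <;> simp [gBracket, sl2Bracket, qAct, sl2Mat_smul, Matrix.smul_mul, Matrix.mul_smul, smul_sub]
    <;> ring

lemma gBracket_smul_right (c : ℝ) (x y : Glie n m) : gBracket x (c • y) = c • gBracket x y := by
  ext <;> simp [gBracket, sl2Bracket, qAct, sl2Mat_smul, Matrix.smul_mul, Matrix.mul_smul, smul_sub]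
    <;> ring

/-- As `sl2Mat n (0, 1, 0) = diag(n - 2r)`, this is `[ρ(-H/2), ρ(p)] = ρ([-H/2, p])` for
`ρ = sl2Mat n`. -/
lemma diagonal_aWeight_mul_sl2Mat (p : Sl2) :
    Matrix.diagonal (fun r => (aWeight n r : ℝ)) * sl2Mat n p =
      sl2Mat n (-p.1, 0, p.2.2) + sl2Mat n p * Matrix.diagonal (fun r => (aWeight n r : ℝ)) := by
  ext ⟨a, ha⟩ ⟨b, hb⟩
  simp only [Matrix.diagonal_mul, Matrix.mul_diagonal, Matrix.add_apply, sl2Mat, aWeight,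
    Fin.mk.injEq]
  split_ifs <;> subst_vars <;> first | omega | (push_cast; ring)

lemma diagonal_aWeight_mul_qAct (q : Qlie m) (u : Avec n m) :
    Matrix.diagonal (fun r => (aWeight n r : ℝ)) * qAct n m q u =
      qAct n m ((-q.1.1, 0, q.1.2.2), 0) u +
        qAct n m q (Matrix.diagonal (fun r => (aWeight n r : ℝ)) * u) := by
  simp only [qAct, Matrix.mul_add, ← Matrix.mul_assoc, diagonal_aWeight_mul_sl2Mat, Matrix.add_mul,
    Matrix.transpose_zero, Matrix.mul_zero, add_zero]
  abel

lemma gBracket_zElt_gBracket (x y : Glie n m) :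
    gBracket (zElt n m) (gBracket x y) =
      gBracket (gBracket (zElt n m) x) y + gBracket x (gBracket (zElt n m) y) := by
  simp only [gBracket_zElt]
  refine Prod.ext (Prod.ext ?_ ?_) ?_
  · ext <;> simp [weightScale_apply, gBracket, sl2Bracket] <;> ring
  · simp [weightScale_apply, gBracket]
  · simp [weightScale_apply, gBracket, diagonal_aWeight_mul_qAct, Matrix.mul_sub]
    abel

lemma gBracket_mem_Egrade {i j : ℤ} {x y : Glie n m} (hx : x ∈ Egrade n m i)
    (hy : y ∈ Egrade n m j) :
    gBracket x y ∈ Egrade n m (i + j) := by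
  simp only [Egrade, Set.mem_ofPred_eq] at *
  rw [gBracket_zElt_gBracket, hx, hy, gBracket_smul_left, gBracket_smul_right, Int.cast_add,
    add_smul]

theorem adZ_grading_general (n m : ℕ) :
    (∀ i : ℤ, (i < -(n:ℤ) - 1 ∨ 1 < i) → Egrade n m i = {0}) ∧
    (∀ x : Glie n m, ∃! f : ℤ → Glie n m,
        (∀ i, f i ∈ Egrade n m i) ∧ (∀ i ∉ Finset.Icc (-(n:ℤ)-1) 1, f i = 0) ∧
        x = ∑ i ∈ Finset.Icc (-(n:ℤ)-1) 1, f i) ∧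
    (∀ (i j : ℤ) (x y : Glie n m), x ∈ Egrade n m i → y ∈ Egrade n m j →
        gBracket x y ∈ Egrade n m (i + j)) := by
  have h_orth := gradeProj_gradeProj (n := n) (m := m)
  refine ⟨fun i hi => ?_, fun x => ?_, fun i j x y => gBracket_mem_Egrade⟩
  · have hi_out : i ∉ Finset.Icc (-(n:ℤ) - 1) 1 := by
      rw [Finset.mem_Icc]
      omega
    ext x
    rw [mem_Egrade_iff, Set.mem_singleton_iff,
      AddMonoidHom.apply_eq_zero_of_notMem_of_orthogonal h_orth sum_gradeProj hi_out, eq_comm]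
  · simp only [mem_Egrade_iff]
    exact AddMonoidHom.existsUnique_sum_of_orthogonal h_orth sum_gradeProj x

/-- `Z = −H/2 − (1 + n/2)·id_m` acts diagonalizably on `g` by the
adjoint action with eigenvalues in `{−n−1, ..., 0, 1}`: every eigenvalue lies in
that range, every element of `g` decomposes uniquely into a sum of
eigenvectors, and the eigenspace decomposition is a Lie algebra grading:
`[g_i, g_j] ⊆ g_{i+j}`. -/
theorem adZ_grading (n m : ℕ) (hn : 2 ≤ n) (hm : 1 ≤ m) :
    (∀ i : ℤ, (i < -(n:ℤ) - 1 ∨ 1 < i) → Egrade n m i = {0}) ∧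
    (∀ x : Glie n m, ∃! f : ℤ → Glie n m,
        (∀ i, f i ∈ Egrade n m i) ∧ (∀ i ∉ Finset.Icc (-(n:ℤ)-1) 1, f i = 0) ∧
        x = ∑ i ∈ Finset.Icc (-(n:ℤ)-1) 1, f i) ∧
    (∀ (i j : ℤ) (x y : Glie n m), x ∈ Egrade n m i → y ∈ Egrade n m j →
        gBracket x y ∈ Egrade n m (i + j)) :=
  adZ_grading_general n m
end
end

section
/- In the graded Lie algebra g arising from an (n+1)-st order ODE system, the Lie bracket restricted to negative degrees satisfies the strong condition [g^i, g^j] ⊆ g^{min(i,j)−1} for all i,j < 0, where g^i = ⊕_{k≥i} g_k is the induced filtration. -/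
noncomputable section

open scoped BigOperators

/-- The filtration `g^i = ⊕_{k ≥ i} g_k` induced by the grading. -/
def gFilt (n m : ℕ) (i : ℤ) : Set (Glie n m) :=
  {x | ∃ f : ℤ → Glie n m, (∀ k, f k ∈ Egrade n m k) ∧ (∀ k, k < i → f k = 0) ∧
    x = ∑ k ∈ Finset.Icc (-(n:ℤ)-1) 1, f k}

/-! `ad Z` is diagonal in the coordinates of `g`: `X`, `H ⊕ gl_m` and `Y` have degrees `-1`, `0`,
`1`, and row `j` of `a = V_n ⊗ ℝ^m` has degree `j - n - 1`. Hence for `i ≤ -1` an element lies in `g^i`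
exactly when its `a`-part vanishes in the rows below `i + n + 1`. The `a`-part of `[x, y]` is
`x·y_a - y·x_a`, and `q` acts on `V_n` by tridiagonal matrices, which lower the index of the first
nonzero row by at most one. So for `x ∈ g^i`, `y ∈ g^j` the bracket vanishes in the rows below
`min i j + n`, i.e. it lies in `g^(min i j - 1)`. -/

lemma sl2Mat_apply_eq_zero_of_add_one_lt (n : ℕ) (p : Sl2) {r l : Fin (n+1)}
    (h : (r:ℕ) + 1 < l) : sl2Mat n p r l = 0 := by
  have h₁ : (l:ℕ) ≠ r + 1 := by omega
  have h₂ : l ≠ r := by rintro rfl; omega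
  have h₃ : (l:ℕ) + 1 ≠ r := by omega
  simp [sl2Mat, h₁, h₂, h₃]

lemma sl2Mat_zElt (n m : ℕ) :
    sl2Mat n (zElt n m).1.1 = Matrix.diagonal fun j : Fin (n+1) => (j:ℝ) - n / 2 := by
  ext i l
  rcases eq_or_ne l i with rfl | h
  · simp [sl2Mat, zElt]; ring
  · simp [sl2Mat, zElt, Matrix.diagonal, h, Ne.symm h]

lemma gBracket_zElt_s3 {n m : ℕ} (x : Glie n m) :
    gBracket (zElt n m) x =
      (((-x.1.1.1, 0, x.1.1.2.2), 0),
        Matrix.of fun (j : Fin (n+1)) b => ((j:ℝ) - n - 1) * x.2 j b) := by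
  ext j b
  · simp [gBracket, sl2Bracket, zElt]; ring
  · simp [gBracket, sl2Bracket, zElt]
  · simp [gBracket, sl2Bracket, zElt]; ring
  · simp [gBracket, zElt]
  · have hz : (zElt n m).2 = 0 := rfl
    simp only [gBracket, qAct, sl2Mat_zElt, hz]
    simp [zElt]
    ring

def gradedComponent (n m : ℕ) (x : Glie n m) (k : ℤ) : Glie n m :=
  ((((if k = -1 then x.1.1.1 else 0), (if k = 0 then x.1.1.2.1 else 0),
      (if k = 1 then x.1.1.2.2 else 0)),
    (if k = 0 then x.1.2 else 0)),
   Matrix.of fun (j : Fin (n+1)) b => if k = (j:ℤ) - n - 1 then x.2 j b else 0)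

lemma gradedComponent_mem_Egrade {n m : ℕ} (x : Glie n m) (k : ℤ) :
    gradedComponent n m x k ∈ Egrade n m k := by
  rw [Egrade, Set.mem_ofPred_eq, gBracket_zElt_s3]
  ext j b
  case snd =>
    simp only [gradedComponent, Matrix.of_apply, Prod.smul_snd, Matrix.smul_apply, smul_eq_mul]
    split_ifs with h
    · rw [h]; push_cast; ring
    · simp
  all_goals simp only [gradedComponent]; split_ifs <;> simp_all

lemma sum_gradedComponent {n m : ℕ} (x : Glie n m) :
    ∑ k ∈ Finset.Icc (-(n:ℤ)-1) 1, gradedComponent n m x k = x := by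
  ext j b <;> simp [gradedComponent, Prod.fst_sum, Prod.snd_sum, Matrix.sum_apply,
    Finset.sum_ite_eq', Matrix.ite_apply]
  have := j.isLt
  omega

lemma snd_apply_eq_zero_of_mem_Egrade {n m : ℕ} {k : ℤ} {x : Glie n m} (hx : x ∈ Egrade n m k)
    {j : Fin (n+1)} (hj : (j:ℤ) - n - 1 ≠ k) (b : Fin m) : x.2 j b = 0 := by
  have hjb := congrFun (congrFun (congrArg Prod.snd hx) j) b
  simp only [gBracket_zElt_s3, Matrix.of_apply, Prod.smul_snd, Matrix.smul_apply,
    smul_eq_mul] at hjb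
  have hne : (j:ℝ) - n - 1 ≠ k := by exact_mod_cast hj
  by_contra hx0
  exact hne (mul_right_cancel₀ hx0 hjb)

lemma snd_apply_eq_zero_of_mem_gFilt {n m : ℕ} {i : ℤ} {x : Glie n m} (hx : x ∈ gFilt n m i)
    {j : Fin (n+1)} (hj : (j:ℤ) < i + n + 1) (b : Fin m) : x.2 j b = 0 := by
  obtain ⟨f, hf, hf_lt, rfl⟩ := hx
  rw [Prod.snd_sum, Matrix.sum_apply]
  refine Finset.sum_eq_zero fun k _ => ?_
  rcases lt_or_ge k i with hk | hk
  · simp [hf_lt k hk]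
  · exact snd_apply_eq_zero_of_mem_Egrade (hf k) (by omega) b

lemma mem_gFilt_of_snd_apply_eq_zero {n m : ℕ} {i : ℤ} (hi : i ≤ -1) {x : Glie n m}
    (hx : ∀ (j : Fin (n+1)) (b : Fin m), (j:ℤ) < i + n + 1 → x.2 j b = 0) :
    x ∈ gFilt n m i := by
  refine ⟨gradedComponent n m x, gradedComponent_mem_Egrade x, fun k hk => ?_,
    (sum_gradedComponent x).symm⟩
  ext j b <;> simp only [gradedComponent, Matrix.of_apply] <;> split_ifs <;>
    first | rfl | omega | exact hx j b (by omega)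

lemma qAct_apply_eq_zero_of_forall_lt {n m : ℕ} (q : Qlie m) {v : Avec n m} {c : ℤ}
    (hv : ∀ (j : Fin (n+1)) (b : Fin m), (j:ℤ) < c → v j b = 0)
    {r : Fin (n+1)} (hr : (r:ℤ) + 1 < c) (b : Fin m) : qAct n m q v r b = 0 := by
  simp only [qAct, Matrix.add_apply, Matrix.mul_apply]
  rw [Finset.sum_eq_zero, Finset.sum_eq_zero, add_zero]
  · exact fun l _ => by rw [hv r l (by omega), zero_mul]
  · intro l _
    rcases lt_or_ge (l:ℤ) c with hl | hl
    · rw [hv l b hl, mul_zero]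
    · rw [sl2Mat_apply_eq_zero_of_add_one_lt n q.1 (by omega), zero_mul]

theorem strong_bracket_condition_general (n m : ℕ) :
    ∀ i j : ℤ, i < 0 → j < 0 → ∀ x ∈ gFilt n m i, ∀ y ∈ gFilt n m j,
      gBracket x y ∈ gFilt n m (min i j - 1) := by
  intro i j hi hj x hx y hy
  refine mem_gFilt_of_snd_apply_eq_zero (by omega) fun r b hr => ?_
  show (qAct n m x.1 y.2 - qAct n m y.1 x.2) r b = 0
  rw [Matrix.sub_apply,
    qAct_apply_eq_zero_of_forall_lt x.1 (fun _ b h => snd_apply_eq_zero_of_mem_gFilt hy h b)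
      (by omega) b,
    qAct_apply_eq_zero_of_forall_lt y.1 (fun _ b h => snd_apply_eq_zero_of_mem_gFilt hx h b)
      (by omega) b,
    sub_zero]

/-- the bracket of `g` restricted to negative filtration degrees
satisfies the strong condition `[g^i, g^j] ⊆ g^{min(i,j)−1}` for all `i,j < 0`. -/
theorem strong_bracket_condition (n m : ℕ) (hn : 2 ≤ n) (hm : 1 ≤ m) :
    ∀ i j : ℤ, i < 0 → j < 0 → ∀ x ∈ gFilt n m i, ∀ y ∈ gFilt n m j,
      gBracket x y ∈ gFilt n m (min i j - 1) :=
  strong_bracket_condition_general n m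
end
end

section
/- The bilinear form ⟨·,·⟩ on g defined by declaring X, H, Y, v^i ⊗ e_b, e^a_b pairwise orthogonal with ⟨X,X⟩ = ⟨Y,Y⟩ = 1, ⟨H,H⟩ = 2, ⟨e^a_b, e^a_b⟩ = 1, ⟨v^i⊗e_b, v^i⊗e_b⟩ = (n−i)!/i! is a positive definite inner product satisfying ⟨A,B⟩ = tr(AᵀB) for A,B in q and ⟨Au, v⟩ = ⟨u, Aᵀv⟩ for all A ∈ q, u,v ∈ a, where Aᵀ is the transpose with respect to the standard matrix realizations. -/
noncomputable section

open scoped BigOperators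

/-- The inner product on `g`: `X, H, Y, v^i ⊗ e_b, e^a_b` are pairwise
orthogonal, `⟨X,X⟩ = ⟨Y,Y⟩ = 1`, `⟨H,H⟩ = 2`, `⟨e^a_b,e^a_b⟩ = 1`,
`⟨v^i⊗e_b, v^i⊗e_b⟩ = (n−i)!/i!`. -/
def innerG {n m : ℕ} (x y : Glie n m) : ℝ :=
  x.1.1.1*y.1.1.1 + 2*x.1.1.2.1*y.1.1.2.1 + x.1.1.2.2*y.1.1.2.2
  + ∑ a : Fin m, ∑ b : Fin m, x.1.2 a b * y.1.2 a b
  + ∑ i : Fin (n+1), ∑ b : Fin m, (((n - (i:ℕ)).factorial : ℝ) / ((i:ℕ).factorial)) * x.2 i b * y.2 i b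

/-- The matrix of `α·X + β·H + γ·Y` in the basis `x, y` of `ℝ²`. -/
def toMat2 (p : Sl2) : Matrix (Fin 2) (Fin 2) ℝ := !![p.2.1, p.1; p.2.2, -p.2.1]

/-- Transpose on `sl₂` (w.r.t. the standard matrix realization): `Xᵀ = Y`,
`Hᵀ = H`, `Yᵀ = X`. -/
def sl2T (p : Sl2) : Sl2 := (p.2.2, p.2.1, p.1)

/-! In coordinates, `innerG` is the sum of three weighted Frobenius pairings
`tr (uᵀ D v)` with positive diagonal `D`: the trace form on the `2 × 2` realization of `sl₂`,
the trace form on `gl_m`, and on `a` the pairing with weights `cᵢ = (n-i)!/i!`. Bilinearity,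
symmetry and positive definiteness follow at once. Adjointness `⟨M u, v⟩ = ⟨u, N v⟩` holds
whenever `D M = Nᵀ D`; for the `sl₂` action this is the identity `cᵢ = (n-i)(i+1) cᵢ₊₁`,
which matches the entry `1` of `X` at `(i, i+1)` with the entry `(n-i)(i+1)` of `Y` at
`(i+1, i)`. -/

open Matrix

section WeightedDot

variable {ι κ : Type*} [Fintype ι] [Fintype κ]

def weightedDot (w : ι → ℝ) (u v : Matrix ι κ ℝ) : ℝ :=
  ∑ i, ∑ b, w i * u i b * v i b

theorem weightedDot_comm (w : ι → ℝ) (u v : Matrix ι κ ℝ) :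
    weightedDot w u v = weightedDot w v u := by
  simp only [weightedDot, mul_right_comm _ (u _ _)]

theorem weightedDot_add_left (w : ι → ℝ) (u u' v : Matrix ι κ ℝ) :
    weightedDot w (u + u') v = weightedDot w u v + weightedDot w u' v := by
  simp only [weightedDot, Matrix.add_apply, mul_add, add_mul, Finset.sum_add_distrib]

theorem weightedDot_add_right (w : ι → ℝ) (u v v' : Matrix ι κ ℝ) :
    weightedDot w u (v + v') = weightedDot w u v + weightedDot w u v' := by
  rw [weightedDot_comm, weightedDot_add_left, weightedDot_comm, weightedDot_comm w v']

theorem weightedDot_smul_left (w : ι → ℝ) (c : ℝ) (u v : Matrix ι κ ℝ) :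
    weightedDot w (c • u) v = c * weightedDot w u v := by
  simp only [weightedDot, Matrix.smul_apply, smul_eq_mul, Finset.mul_sum]
  exact Finset.sum_congr rfl fun i _ => Finset.sum_congr rfl fun b _ => by ring

theorem weightedDot_zero_left (w : ι → ℝ) (v : Matrix ι κ ℝ) : weightedDot w 0 v = 0 := by
  simp [weightedDot]

theorem weightedDot_self_nonneg {w : ι → ℝ} (hw : ∀ i, 0 ≤ w i) (u : Matrix ι κ ℝ) :
    0 ≤ weightedDot w u u :=
  Finset.sum_nonneg fun i _ => Finset.sum_nonneg fun b _ => by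
    rw [mul_assoc]; exact mul_nonneg (hw i) (mul_self_nonneg _)

theorem weightedDot_self_eq_zero_iff {w : ι → ℝ} (hw : ∀ i, 0 < w i) {u : Matrix ι κ ℝ} :
    weightedDot w u u = 0 ↔ u = 0 := by
  have hterm : ∀ i b, 0 ≤ w i * u i b * u i b := fun i b => by
    rw [mul_assoc]; exact mul_nonneg (hw i).le (mul_self_nonneg _)
  simp only [weightedDot, Finset.sum_eq_zero_iff_of_nonneg
    (fun i _ => Finset.sum_nonneg fun b _ => hterm i b),
    Finset.sum_eq_zero_iff_of_nonneg (fun b _ => hterm _ b)]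
  simp [mul_assoc, (hw _).ne', ← Matrix.ext_iff]

variable [DecidableEq ι]

theorem weightedDot_eq_trace (w : ι → ℝ) (u v : Matrix ι κ ℝ) :
    weightedDot w u v = (uᵀ * diagonal w * v).trace := by
  simp only [weightedDot, trace, diag, mul_apply, transpose_apply, diagonal_apply, mul_ite,
    mul_zero, Finset.sum_ite_eq', Finset.mem_univ, if_true]
  rw [Finset.sum_comm]
  simp only [mul_comm (u _ _)]

theorem weightedDot_one (u v : Matrix ι κ ℝ) : weightedDot 1 u v = (uᵀ * v).trace := by
  rw [weightedDot_eq_trace, Pi.one_def, diagonal_one, Matrix.mul_one]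

theorem weightedDot_mul_left {w : ι → ℝ} {M N : Matrix ι ι ℝ}
    (h : diagonal w * M = Nᵀ * diagonal w) (u v : Matrix ι κ ℝ) :
    weightedDot w (M * u) v = weightedDot w u (N * v) := by
  have h' := congrArg transpose h
  simp only [transpose_mul, diagonal_transpose, transpose_transpose] at h'
  simp only [weightedDot_eq_trace, transpose_mul, Matrix.mul_assoc]
  rw [← Matrix.mul_assoc Mᵀ, h', Matrix.mul_assoc]

theorem weightedDot_mul_transpose_left (w : ι → ℝ) (B : Matrix κ κ ℝ) (u v : Matrix ι κ ℝ) :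
    weightedDot w (u * Bᵀ) v = weightedDot w u (v * B) := by
  simp only [weightedDot_eq_trace, transpose_mul, transpose_transpose, Matrix.mul_assoc]
  rw [trace_mul_comm]
  simp only [Matrix.mul_assoc]

end WeightedDot

def vnWeight (n i : ℕ) : ℝ := ((n - i).factorial : ℝ) / i.factorial

theorem vnWeight_pos (n i : ℕ) : 0 < vnWeight n i := by
  unfold vnWeight; positivity

theorem vnWeight_eq_mul_vnWeight_succ {n i : ℕ} (h : i < n) :
    vnWeight n i = ((n : ℝ) - i) * (i + 1) * vnWeight n (i + 1) := by
  obtain ⟨k, rfl⟩ := Nat.exists_eq_add_of_lt h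
  have hk : i + k + 1 - i = k + 1 := by omega
  have hk' : i + k + 1 - (i + 1) = k := by omega
  simp only [vnWeight, hk, hk', Nat.factorial_succ]
  push_cast
  field_simp
  ring

theorem diagonal_vnWeight_mul_sl2Mat (n : ℕ) (p : Sl2) :
    diagonal (fun i : Fin (n + 1) => vnWeight n i) * sl2Mat n p
      = (sl2Mat n (sl2T p))ᵀ * diagonal (fun i : Fin (n + 1) => vnWeight n i) := by
  ext i j
  simp only [diagonal_mul, mul_diagonal, transpose_apply, sl2Mat, sl2T, Fin.ext_iff]
  have hi := i.is_lt
  have hj := j.is_lt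
  split_ifs <;> first | (exfalso; omega) | skip
  · rw [show (j : ℕ) = i + 1 by omega, vnWeight_eq_mul_vnWeight_succ (by omega)]
    push_cast; ring
  · rw [show (j : ℕ) = i by omega]; ring
  · rw [show (i : ℕ) = j + 1 by omega, vnWeight_eq_mul_vnWeight_succ (i := j) (by omega)]
    push_cast; ring
  · ring

theorem toMat2_add (p q : Sl2) : toMat2 (p + q) = toMat2 p + toMat2 q := by
  ext i j; fin_cases i <;> fin_cases j <;> simp [toMat2, add_comm]

theorem toMat2_smul (c : ℝ) (p : Sl2) : toMat2 (c • p) = c • toMat2 p := by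
  ext i j; fin_cases i <;> fin_cases j <;> simp [toMat2]

theorem toMat2_eq_zero_iff {p : Sl2} : toMat2 p = 0 ↔ p = 0 := by
  obtain ⟨a, b, c⟩ := p
  simp only [toMat2, ← Matrix.ext_iff, of_apply, cons_val', cons_val_fin_one, Matrix.zero_apply,
    Fin.forall_fin_two, cons_val_zero, cons_val_one, neg_eq_zero, Prod.ext_iff, Prod.fst_zero,
    Prod.snd_zero]
  tauto

section InnerG

variable {n m : ℕ}

theorem innerG_eq (x y : Glie n m) :
    innerG x y = weightedDot 1 (toMat2 x.1.1) (toMat2 y.1.1) + weightedDot 1 x.1.2 y.1.2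
      + weightedDot (fun i : Fin (n + 1) => vnWeight n i) x.2 y.2 := by
  simp only [innerG, weightedDot, vnWeight, toMat2, Fin.sum_univ_two, Pi.one_apply, one_mul,
    of_apply, cons_val', cons_val_zero, cons_val_one, cons_val_fin_one, mul_neg, neg_mul, neg_neg]
  ring

theorem innerG_self_pos {x : Glie n m} (hx : x ≠ 0) : 0 < innerG x x := by
  obtain ⟨⟨p, B⟩, u⟩ := x
  have hp := weightedDot_self_nonneg (w := 1) (fun _ => zero_le_one) (toMat2 p)
  have hB := weightedDot_self_nonneg (w := 1) (fun _ => zero_le_one) B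
  have hu := weightedDot_self_nonneg (fun i : Fin (n + 1) => (vnWeight_pos n i).le) u
  rw [innerG_eq]
  dsimp only
  refine lt_of_le_of_ne (by positivity) fun h => hx ?_
  have hp0 : toMat2 p = 0 :=
    (weightedDot_self_eq_zero_iff (w := 1) fun _ => one_pos).1 (by linarith)
  have hB0 : B = 0 := (weightedDot_self_eq_zero_iff (w := 1) fun _ => one_pos).1 (by linarith)
  have hu0 : u = 0 :=
    (weightedDot_self_eq_zero_iff fun i : Fin (n + 1) => vnWeight_pos n i).1 (by linarith)
  rw [toMat2_eq_zero_iff.1 hp0, hB0, hu0]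
  rfl

theorem innerG_qAct_left (p : Sl2) (B : Gl m) (u v : Avec n m) :
    innerG ((0 : Qlie m), qAct n m (p, B) u) ((0 : Qlie m), v)
      = innerG ((0 : Qlie m), u) ((0 : Qlie m), qAct n m (sl2T p, B.transpose) v) := by
  simp only [innerG_eq, qAct, weightedDot_add_left, weightedDot_add_right,
    weightedDot_mul_left (diagonal_vnWeight_mul_sl2Mat n p), weightedDot_mul_transpose_left,
    transpose_transpose]

end InnerG

theorem innerG_properties_general (n m : ℕ) :
    (∀ x y : Glie n m, innerG x y = innerG y x) ∧
    (∀ x y z : Glie n m, innerG (x + y) z = innerG x z + innerG y z) ∧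
    (∀ (c : ℝ) (x y : Glie n m), innerG (c • x) y = c * innerG x y) ∧
    (∀ x : Glie n m, x ≠ 0 → 0 < innerG x x) ∧
    (∀ (p q : Sl2) (B C : Gl m),
        innerG (n := n) ((p, B), 0) ((q, C), 0)
          = ((toMat2 p).transpose * toMat2 q).trace + (B.transpose * C).trace) ∧
    (∀ (p : Sl2) (B : Gl m) (u v : Avec n m),
        innerG ((0 : Qlie m), qAct n m (p, B) u) ((0 : Qlie m), v)
          = innerG ((0 : Qlie m), u) ((0 : Qlie m), qAct n m (sl2T p, B.transpose) v)) := by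
  refine ⟨fun x y => ?_, fun x y z => ?_, fun c x y => ?_, fun x => innerG_self_pos,
    fun p q B C => ?_, innerG_qAct_left⟩
  · simp only [innerG_eq, weightedDot_comm _ x.1.2, weightedDot_comm _ x.2,
      weightedDot_comm _ (toMat2 x.1.1)]
  · simp only [innerG_eq, Prod.fst_add, Prod.snd_add, toMat2_add, weightedDot_add_left]
    ring
  · simp only [innerG_eq, Prod.smul_fst, Prod.smul_snd, toMat2_smul, weightedDot_smul_left]
    ring
  · rw [innerG_eq, weightedDot_one, weightedDot_one, weightedDot_zero_left, add_zero]

/-- the bilinear form `⟨·,·⟩` on `g` is a positive definite inner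
product, on `q` it is `⟨A,B⟩ = tr(AᵀB)`, and the action of `q` on `a`
satisfies `⟨Au, v⟩ = ⟨u, Aᵀv⟩`. -/
theorem innerG_properties (n m : ℕ) (hn : 2 ≤ n) (hm : 1 ≤ m) :
    (∀ x y : Glie n m, innerG x y = innerG y x) ∧
    (∀ x y z : Glie n m, innerG (x + y) z = innerG x z + innerG y z) ∧
    (∀ (c : ℝ) (x y : Glie n m), innerG (c • x) y = c * innerG x y) ∧
    (∀ x : Glie n m, x ≠ 0 → 0 < innerG x x) ∧
    (∀ (p q : Sl2) (B C : Gl m),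
        innerG (n := n) ((p, B), 0) ((q, C), 0)
          = ((toMat2 p).transpose * toMat2 q).trace + (B.transpose * C).trace) ∧
    (∀ (p : Sl2) (B : Gl m) (u v : Avec n m),
        innerG ((0 : Qlie m), qAct n m (p, B) u) ((0 : Qlie m), v)
          = innerG ((0 : Qlie m), u) ((0 : Qlie m), qAct n m (sl2T p, B.transpose) v)) :=
  innerG_properties_general n m
end
end

section
/- Let a = V_n ⊗ ℝ^m and q = sl₂ ⊕ gl_m ⊆ gl(a) acting via the tensor product representation (n ≥ 2, m ≥ 1, excluding (n,m) = (2,1)). Then the first prolongation of q is trivial: if φ : a → q is linear and satisfies φ(u)v = φ(v)u for all u,v ∈ a, then φ = 0. -/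
noncomputable section

open scoped BigOperators

/-!
Write `φ (v^i ⊗ e_b) = (p_{ib}, B_{ib})`. Evaluated on basis vectors, `φ(u)v = φ(v)u` becomes an
identity between entries of the tridiagonal matrices of the `p`'s and entries of the `B`'s.

If `m ≥ 2`, pair `v^i ⊗ e_b` with `v^j ⊗ e_c` for some `c ≠ b` and read off the `e_c`-component:
`p_{ib} + B_{ib,cc} • 1` kills every row of `V_n` except row `i`. An element of `gl₂` whose matrix
has at most one nonzero row is zero once `dim V_n ≥ 3`, so `p_{ib} = 0`, and then `B_{ib} = 0`.

If `m = 1`, the elements `T_i = p_i + B_i • 1 ∈ gl₂` satisfy `T_i v^j = T_j v^i`, i.e. they form an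
element of the first prolongation of `gl₂` acting on `V_n`. Comparing entries two steps away from
the diagonal kills the `X`- and `Y`-coefficients; at the corners (the `X`-part of `T_0`, the
`Y`-part of `T_n`) this needs `n ≥ 3` (for `n = 2` the prolongation of `gl₂ ≅ co(3)` is `ℝ³`).
Then all `T_i` are diagonal, and the row argument of the case `m ≥ 2` applies.
-/

def sl2Entry (n : ℕ) (p : Sl2) (k j : ℕ) : ℝ :=
  p.1 * (if j = k + 1 then 1 else 0)
    + p.2.1 * (if j = k then (n : ℝ) - 2 * k else 0)
    + p.2.2 * (if j + 1 = k then ((n : ℝ) - k + 1) * k else 0)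

def gl2Entry (n : ℕ) (p : Sl2) (l : ℝ) (k j : ℕ) : ℝ :=
  sl2Entry n p k j + if j = k then l else 0

section Entries

variable {n : ℕ} {p : Sl2}

theorem sl2Mat_apply (k j : Fin (n + 1)) : sl2Mat n p k j = sl2Entry n p k j := by
  simp only [sl2Mat, sl2Entry, Fin.val_inj]

theorem sl2Entry_self_succ (k : ℕ) : sl2Entry n p k (k + 1) = p.1 := by
  simp [sl2Entry, show k + 1 + 1 ≠ k by omega]

theorem sl2Entry_self (k : ℕ) : sl2Entry n p k k = p.2.1 * ((n : ℝ) - 2 * k) := by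
  simp [sl2Entry]

theorem sl2Entry_succ_self_eq_zero_iff {j : ℕ} (hj : j < n) :
    sl2Entry n p (j + 1) j = 0 ↔ p.2.2 = 0 := by
  have hpos : (0 : ℝ) < ((n : ℝ) - (j + 1) + 1) * (j + 1) := by
    have : (j : ℝ) + 1 ≤ n := by exact_mod_cast hj
    apply mul_pos <;> [linarith; positivity]
  simp [sl2Entry, show j ≠ j + 1 + 1 by omega, hpos.ne']

theorem sl2Entry_eq_zero {k j : ℕ} (h₁ : j ≠ k + 1) (h₂ : j ≠ k) (h₃ : j + 1 ≠ k) :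
    sl2Entry n p k j = 0 := by
  simp [sl2Entry, h₁, h₂, h₃]

theorem sl2Entry_eq_zero_of_lt {k j : ℕ} (hp : p.1 = 0) (h : k < j) : sl2Entry n p k j = 0 := by
  simp [sl2Entry, hp, show j ≠ k by omega, show j + 1 ≠ k by omega]

theorem sl2Entry_eq_zero_of_gt {k j : ℕ} (hp : p.2.2 = 0) (h : j < k) :
    sl2Entry n p k j = 0 := by
  simp [sl2Entry, hp, show j ≠ k by omega, show j ≠ k + 1 by omega]

theorem gl2Entry_of_ne {l : ℝ} {k j : ℕ} (h : j ≠ k) :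
    gl2Entry n p l k j = sl2Entry n p k j := by
  simp [gl2Entry, h]

end Entries

theorem eq_zero_of_affine_eq_zero {a b x y : ℝ} (hxy : x ≠ y) (hx : a * x + b = 0)
    (hy : a * y + b = 0) : a = 0 ∧ b = 0 := by
  have ha : a = 0 := by
    have : a * (x - y) = 0 := by linear_combination hx - hy
    exact (mul_eq_zero.mp this).resolve_right (sub_ne_zero.mpr hxy)
  exact ⟨ha, by simpa [ha] using hx⟩

theorem eq_zero_of_gl2Entry_eq_zero {n i : ℕ} {p : Sl2} {l : ℝ} (hn : 2 ≤ n)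
    (h : ∀ k j, k ≤ n → j ≤ n → k ≠ i → gl2Entry n p l k j = 0) : p = 0 ∧ l = 0 := by
  obtain ⟨k, hk, hki⟩ : ∃ k, k + 1 ≤ n ∧ k ≠ i :=
    ⟨if i = 0 then 1 else 0, by split_ifs <;> omega, by split_ifs <;> omega⟩
  have hX : p.1 = 0 := by
    simpa [gl2Entry_of_ne, sl2Entry_self_succ] using h k (k + 1) (by omega) hk hki
  obtain ⟨j, hj, hji⟩ : ∃ j, j + 1 ≤ n ∧ j + 1 ≠ i :=
    ⟨if i = 1 then 1 else 0, by split_ifs <;> omega, by split_ifs <;> omega⟩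
  have hY : p.2.2 = 0 := (sl2Entry_succ_self_eq_zero_iff hj).1 <| by
    simpa [gl2Entry_of_ne] using h (j + 1) j hj (by omega) hji
  have hdiag : ∀ k ≤ n, k ≠ i → p.2.1 * ((n : ℝ) - 2 * k) + l = 0 := fun k hk hki => by
    simpa [gl2Entry, sl2Entry_self] using h k k hk hk hki
  obtain ⟨k₁, k₂, hk₁, hk₂, hk₁i, hk₂i, hk₁₂⟩ :
      ∃ k₁ k₂, k₁ ≤ n ∧ k₂ ≤ n ∧ k₁ ≠ i ∧ k₂ ≠ i ∧ k₁ < k₂ :=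
    ⟨if i = 0 then 1 else 0, if i = 2 then 1 else 2, by split_ifs <;> omega,
      by split_ifs <;> omega, by split_ifs <;> omega, by split_ifs <;> omega,
      by split_ifs <;> omega⟩
  have hne : (n : ℝ) - 2 * k₁ ≠ n - 2 * k₂ := by
    have : (k₁ : ℝ) < k₂ := by exact_mod_cast hk₁₂
    linarith
  obtain ⟨hH, hl⟩ := eq_zero_of_affine_eq_zero hne (hdiag k₁ hk₁ hk₁i) (hdiag k₂ hk₂ hk₂i)
  exact ⟨Prod.ext hX (Prod.ext hH hY), hl⟩

theorem gl2_prolongation_eq_zero {n : ℕ} (hn : 3 ≤ n) {p : ℕ → Sl2} {l : ℕ → ℝ}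
    (h : ∀ i j k, i ≤ n → j ≤ n → k ≤ n →
      gl2Entry n (p i) (l i) k j = gl2Entry n (p j) (l j) k i)
    {i : ℕ} (hi : i ≤ n) : p i = 0 ∧ l i = 0 := by
  have hs : ∀ i j k, i ≤ n → j ≤ n → k ≤ n → j ≠ k → i ≠ k →
      sl2Entry n (p i) k j = sl2Entry n (p j) k i := fun i j k hi hj hk hjk hik => by
    simpa [gl2Entry_of_ne, hjk, hik] using h i j k hi hj hk
  obtain ⟨N, rfl⟩ : ∃ N, n = N + 1 := ⟨n - 1, by omega⟩
  have hX₀ : (p 0).1 = 0 := by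
    rw [← sl2Entry_self_succ (n := N + 1) N, hs 0 (N + 1) N (by omega) le_rfl (by omega)
      (by omega) (by omega)]
    exact sl2Entry_eq_zero (by omega) (by omega) (by omega)
  have hYn : (p (N + 1)).2.2 = 0 := by
    refine (sl2Entry_succ_self_eq_zero_iff (n := N + 1) (j := 0) (by omega)).1 ?_
    rw [hs (N + 1) 0 1 le_rfl (by omega) (by omega) (by omega) (by omega)]
    exact sl2Entry_eq_zero (by omega) (by omega) (by omega)
  have hX : ∀ a ≤ N + 1, (p a).1 = 0 := by
    intro a ha
    rcases a with _ | _ | j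
    · exact hX₀
    · rw [← sl2Entry_self_succ (n := N + 1) N, hs 1 (N + 1) N (by omega) le_rfl (by omega)
        (by omega) (by omega)]
      exact sl2Entry_eq_zero_of_gt hYn (by omega)
    · rw [← sl2Entry_self_succ (n := N + 1) j, hs (j + 2) (j + 1) j ha (by omega) (by omega)
        (by omega) (by omega)]
      exact sl2Entry_eq_zero (by omega) (by omega) (by omega)
  have hY : ∀ a ≤ N + 1, (p a).2.2 = 0 := by
    intro a ha
    rcases (show a + 2 ≤ N + 1 ∨ a = N ∨ a = N + 1 by omega) with ha | rfl | ha
    · refine (sl2Entry_succ_self_eq_zero_iff (n := N + 1) (j := a + 1) (by omega)).1 ?_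
      rw [hs a (a + 1) (a + 1 + 1) (by omega) (by omega) ha (by omega) (by omega)]
      exact sl2Entry_eq_zero (by omega) (by omega) (by omega)
    · refine (sl2Entry_succ_self_eq_zero_iff (n := a + 1) (j := 0) (by omega)).1 ?_
      rw [hs a 0 1 ha (by omega) (by omega) (by omega) (by omega)]
      exact sl2Entry_eq_zero_of_lt hX₀ (by omega)
    · rw [ha]
      exact hYn
  refine eq_zero_of_gl2Entry_eq_zero (n := N + 1) (i := i) (by omega) fun k j hk hj hki => ?_
  rw [h i j k hi hj hk, gl2Entry_of_ne (Ne.symm hki)]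
  rcases Nat.lt_or_gt_of_ne hki with hlt | hgt
  · exact sl2Entry_eq_zero_of_lt (hX j hj) hlt
  · exact sl2Entry_eq_zero_of_gt (hY j hj) hgt

theorem qAct_single_apply {n m : ℕ} (x : Qlie m) (j k : Fin (n + 1)) (c d : Fin m) :
    qAct n m x (Matrix.single j c 1) k d =
      (if c = d then sl2Entry n x.1 k j else 0) + if (j : ℕ) = k then x.2 d c else 0 := by
  by_cases hcd : c = d <;> by_cases hjk : j = k <;>
    simp [qAct, Matrix.mul_apply, Matrix.single, sl2Mat_apply, Fin.val_inj, hcd, hjk, ite_and]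

def MemFirstProlongation {n m : ℕ} (φ : Avec n m →ₗ[ℝ] Qlie m) : Prop :=
  ∀ u v : Avec n m, qAct n m (φ u) v = qAct n m (φ v) u

section Prolongation

open Fin.NatCast

variable {n m : ℕ}

theorem MemFirstProlongation.single_apply {φ : Avec n m →ₗ[ℝ] Qlie m}
    (hφ : MemFirstProlongation φ) {i j k : ℕ} (hi : i ≤ n) (hj : j ≤ n) (hk : k ≤ n)
    (b c d : Fin m) :
    (if c = d then sl2Entry n (φ (Matrix.single (i : Fin (n + 1)) b 1)).1 k j else 0)
        + (if j = k then (φ (Matrix.single (i : Fin (n + 1)) b 1)).2 d c else 0) =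
      (if b = d then sl2Entry n (φ (Matrix.single (j : Fin (n + 1)) c 1)).1 k i else 0)
        + if i = k then (φ (Matrix.single (j : Fin (n + 1)) c 1)).2 d b else 0 := by
  have h := congrFun (congrFun (hφ (Matrix.single i b 1) (Matrix.single j c 1)) k) d
  rwa [qAct_single_apply, qAct_single_apply, Fin.val_cast_of_lt (by omega : i < n + 1),
    Fin.val_cast_of_lt (by omega : j < n + 1), Fin.val_cast_of_lt (by omega : k < n + 1)] at h

theorem MemFirstProlongation.map_single_eq_zero_of_two_le {φ : Avec n m →ₗ[ℝ] Qlie m}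
    (hφ : MemFirstProlongation φ) (hn : 2 ≤ n) (hm : 2 ≤ m) {i : ℕ} (hi : i ≤ n) (b : Fin m) :
    φ (Matrix.single (i : Fin (n + 1)) b 1) = 0 := by
  have : Nontrivial (Fin m) := Fin.nontrivial_iff_two_le.mpr hm
  have hsl : ∀ a ≤ n, ∀ e, (φ (Matrix.single (a : Fin (n + 1)) e 1)).1 = 0 := by
    intro a ha e
    obtain ⟨c, hc⟩ := exists_ne e
    refine (eq_zero_of_gl2Entry_eq_zero hn (i := a)
      (l := (φ (Matrix.single (a : Fin (n + 1)) e 1)).2 c c) fun k j hk hj hka => ?_).1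
    simpa [gl2Entry, Ne.symm hc, Ne.symm hka] using hφ.single_apply ha hj hk e c c
  obtain ⟨j, hj, hji⟩ : ∃ j ≤ n, j ≠ i :=
    ⟨if i = 0 then 1 else 0, by split_ifs <;> omega, by split_ifs <;> omega⟩
  refine Prod.ext (hsl i hi b) (Matrix.ext fun d c => ?_)
  simpa [sl2Entry, hsl i hi b, hsl j hj c, Ne.symm hji] using hφ.single_apply hi hj hj b c d

theorem MemFirstProlongation.map_single_eq_zero_of_eq_one {φ : Avec n 1 →ₗ[ℝ] Qlie 1}
    (hφ : MemFirstProlongation φ) (hn : 3 ≤ n) {i : ℕ} (hi : i ≤ n) :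
    φ (Matrix.single (i : Fin (n + 1)) 0 1) = 0 := by
  obtain ⟨hsl, hgl⟩ := gl2_prolongation_eq_zero hn
    (p := fun a => (φ (Matrix.single (a : Fin (n + 1)) 0 1)).1)
    (l := fun a => (φ (Matrix.single (a : Fin (n + 1)) 0 1)).2 0 0)
    (fun a j k ha hj hk => by simpa [gl2Entry] using hφ.single_apply ha hj hk 0 0 0) hi
  refine Prod.ext hsl (Matrix.ext fun d c => ?_)
  rwa [Subsingleton.elim d 0, Subsingleton.elim c 0]

end Prolongation

theorem first_prolongation_trivial_general (n m : ℕ) (hn : 2 ≤ n)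
    (hex : ¬(n = 2 ∧ m = 1)) (φ : Avec n m →ₗ[ℝ] Qlie m)
    (hφ : ∀ u v : Avec n m, qAct n m (φ u) v = qAct n m (φ v) u) :
    φ = 0 := by
  refine (Matrix.stdBasis ℝ (Fin (n + 1)) (Fin m)).ext fun ⟨i, b⟩ => ?_
  rw [Matrix.stdBasis_eq_single, LinearMap.zero_apply, ← Fin.cast_val_eq_self i]
  have hi : (i : ℕ) ≤ n := Nat.le_of_lt_succ i.isLt
  rcases (Nat.succ_le_of_lt b.pos).eq_or_lt with rfl | hm
  · rw [Subsingleton.elim b 0]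
    exact MemFirstProlongation.map_single_eq_zero_of_eq_one hφ (by omega) hi
  · exact MemFirstProlongation.map_single_eq_zero_of_two_le hφ hn hm hi b

/-- the first prolongation of `q = sl₂ ⊕ gl_m ⊆ gl(a)`,
`a = V_n ⊗ ℝ^m`, is trivial (for `n ≥ 2`, `m ≥ 1`, `(n,m) ≠ (2,1)`): any
linear `φ : a → q` with `φ(u)v = φ(v)u` for all `u, v ∈ a` vanishes. -/
theorem first_prolongation_trivial (n m : ℕ) (hn : 2 ≤ n) (hm : 1 ≤ m)
    (hex : ¬(n = 2 ∧ m = 1)) (φ : Avec n m →ₗ[ℝ] Qlie m)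
    (hφ : ∀ u v : Avec n m, qAct n m (φ u) v = qAct n m (φ v) u) :
    φ = 0 :=
  first_prolongation_trivial_general n m hn hex φ hφ
end
end
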